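/- For any natural numbers m and n, Σ over all tuples (y_1,...,y_m) of non-negative integers with Σ_{i=1}^m i·y_i = m of Π_{i=1}^{m} (1/y_i!) · (n/i)^{y_i} = C(n+m-1, m). -/

import Mathlib

/-!
For coefficients `a`, let `S k` be the sum over partitions of `k` of `∏ a_i ^ y_i / y_i!`, the
coefficient of `x ^ k` in `exp (∑ a_i x ^ i)`. Removing one part of size `i` from a partition of
`k` gives `k S k = ∑_{i ≤ k} i a_i S (k - i)` (the coefficientwise form of `F' = G' F` for
`F = exp G`). For `a_i = n / i` this reads `k S k = n ∑_{j < k} S j`, a recursion that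
`C(n + k - 1, k)` satisfies as well.
-/

open Finset Function Nat

/-- `y i` is the multiplicity of the part `i + 1`; the bound `y i ≤ k` only makes the set
visibly finite. -/
def partMultiplicities (M k : ℕ) : Finset (Fin M → ℕ) :=
  (Fintype.piFinset fun _ => range (k + 1)).filter fun y => ∑ i, (i.1 + 1) * y i = k

lemma succ_mul_le_of_sum_eq {M k : ℕ} {y : Fin M → ℕ} (hy : ∑ j, (j.1 + 1) * y j = k)
    (i : Fin M) : (i.1 + 1) * y i ≤ k :=
  hy ▸ single_le_sum (f := fun j => (j.1 + 1) * y j) (fun _ _ => Nat.zero_le _) (mem_univ i)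

lemma mem_partMultiplicities {M k : ℕ} {y : Fin M → ℕ} :
    y ∈ partMultiplicities M k ↔ ∑ i, (i.1 + 1) * y i = k := by
  simp only [partMultiplicities, mem_filter, Fintype.mem_piFinset, mem_range,
    and_iff_right_iff_imp]
  intro hy i
  have := succ_mul_le_of_sum_eq hy i
  have : y i ≤ (i.1 + 1) * y i := Nat.le_mul_of_pos_left _ i.1.succ_pos
  omega

lemma sum_succ_mul_update_add {M : ℕ} (y : Fin M → ℕ) (i : Fin M) (b : ℕ) :
    ∑ j, (j.1 + 1) * update y i b j + (i.1 + 1) * y i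
      = ∑ j, (j.1 + 1) * y j + (i.1 + 1) * b := by
  have key (b : ℕ) : ∑ j, (j.1 + 1) * update y i b j
      = (i.1 + 1) * b + ∑ j ∈ univ \ {i}, (j.1 + 1) * y j := by
    rw [← sum_update_of_mem (mem_univ i)]
    exact sum_congr rfl fun j _ => apply_update (fun (j : Fin M) c => (j.1 + 1) * c) y i b j
  have := key (y i)
  rw [update_eq_self] at this
  rw [key, this]
  ring

lemma mul_choose_add_sub_one (n k : ℕ) :
    k * (n + k - 1).choose k = n * ∑ j ∈ range k, (n + j - 1).choose j := by
  induction k with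
  | zero => simp
  | succ k ih =>
    have step : (k + 1) * (n + k).choose (k + 1) = (n + k) * (n + k - 1).choose k := by
      rcases Nat.eq_zero_or_pos (n + k) with h | h
      · simp [h]
      · obtain ⟨s, hs⟩ : ∃ s, n + k = s + 1 := ⟨n + k - 1, by omega⟩
        rw [hs, Nat.add_sub_cancel, add_one_mul_choose_eq, mul_comm]
    rw [sum_range_succ, mul_add, ← ih, show n + (k + 1) - 1 = n + k by omega, step]
    ring

section

variable {K : Type*} [Field K] (a : ℕ → K) {M : ℕ}

def partWeight (y : Fin M → ℕ) : K := ∏ i : Fin M, a i ^ y i / (y i)!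

def partitionSum (M k : ℕ) : K := ∑ y ∈ partMultiplicities M k, partWeight a y

lemma partitionSum_zero (M : ℕ) : partitionSum a M 0 = 1 := by
  have : partMultiplicities M 0 = {0} := by
    ext y
    simp [mem_partMultiplicities, funext_iff]
  simp [partitionSum, this, partWeight]

lemma partWeight_update (y : Fin M → ℕ) (i : Fin M) (b : ℕ) :
    partWeight a (update y i b) = a i ^ b / b ! * ∏ j ∈ univ \ {i}, a j ^ y j / (y j)! := by
  rw [partWeight, ← prod_update_of_mem (mem_univ i)]
  exact prod_congr rfl fun j _ =>
    apply_update (fun (j : Fin M) (c : ℕ) => a j ^ c / (c ! : K)) y i b j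

lemma succ_mul_partWeight_update_succ [CharZero K] (y : Fin M → ℕ) (i : Fin M) (c : ℕ) :
    (c + 1 : K) * partWeight a (update y i (c + 1)) = a i * partWeight a (update y i c) := by
  rw [partWeight_update, partWeight_update, ← mul_assoc, ← mul_assoc]
  congr 1
  rw [factorial_succ, pow_succ]
  push_cast
  field_simp

lemma sum_mul_partWeight_of_le [CharZero K] {i : Fin M} {k : ℕ} (hik : i.1 + 1 ≤ k) :
    ∑ y ∈ partMultiplicities M k, (y i : K) * partWeight a y
      = a i * partitionSum a M (k - (i.1 + 1)) := by
  -- removing one part `i + 1` is a bijection onto the partitions of `k - (i + 1)`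
  rw [← sum_filter_of_ne (p := fun y => y i ≠ 0) fun y _ h h0 => h (by simp [h0]),
    partitionSum, mul_sum]
  refine sum_nbij' (fun y => update y i (y i - 1)) (fun y => update y i (y i + 1))
    ?_ ?_ ?_ ?_ ?_
  · intro y hy
    obtain ⟨hy, hne⟩ := mem_filter.1 hy
    rw [mem_partMultiplicities] at hy ⊢
    have hupd := sum_succ_mul_update_add y i (y i - 1)
    have hmul : (i.1 + 1) * (y i - 1) + (i.1 + 1) = (i.1 + 1) * y i := by
      rw [← Nat.mul_succ, Nat.succ_eq_add_one, Nat.sub_add_cancel (Nat.one_le_iff_ne_zero.2 hne)]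
    omega
  · intro y hy
    rw [mem_partMultiplicities] at hy
    rw [mem_filter, mem_partMultiplicities, update_self]
    have hupd := sum_succ_mul_update_add y i (y i + 1)
    have hmul : (i.1 + 1) * (y i + 1) = (i.1 + 1) * y i + (i.1 + 1) := Nat.mul_succ _ _
    refine ⟨?_, Nat.succ_ne_zero _⟩
    omega
  · intro y hy
    have : y i ≠ 0 := (mem_filter.1 hy).2
    ext j
    rcases eq_or_ne j i with rfl | hne
    · simp only [update_self]; omega
    · simp [update_of_ne hne]
  · intro y _
    simp
  · intro y hy
    obtain ⟨c, hc⟩ := Nat.exists_eq_succ_of_ne_zero (mem_filter.1 hy).2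
    conv_lhs => rw [← update_eq_self i y, hc]
    simp only [hc, update_self, Nat.succ_sub_one]
    exact_mod_cast succ_mul_partWeight_update_succ a y i c

lemma sum_mul_partWeight_of_lt {i : Fin M} {k : ℕ} (hki : k < i.1 + 1) :
    ∑ y ∈ partMultiplicities M k, (y i : K) * partWeight a y = 0 := by
  refine sum_eq_zero fun y hy => ?_
  have := succ_mul_le_of_sum_eq (mem_partMultiplicities.1 hy) i
  have : y i = 0 := by
    by_contra h
    have : i.1 + 1 ≤ (i.1 + 1) * y i := Nat.le_mul_of_pos_right _ (Nat.pos_of_ne_zero h)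
    omega
  simp [this]

lemma mul_partitionSum [CharZero K] (k : ℕ) :
    k * partitionSum a M k
      = ∑ i ∈ range (min M k), (i + 1) * a i * partitionSum a M (k - (i + 1)) := by
  have hswap : (k : K) * partitionSum a M k
      = ∑ i : Fin M,
          (i.1 + 1) * ∑ y ∈ partMultiplicities M k, (y i : K) * partWeight a y := by
    simp_rw [partitionSum, mul_sum]
    rw [sum_comm]
    refine sum_congr rfl fun y hy => ?_
    rw [← mem_partMultiplicities.1 hy]
    push_cast
    rw [sum_mul]
    exact sum_congr rfl fun i _ => mul_assoc _ _ _
  have hterm (i : Fin M) :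
      (i.1 + 1 : K) * ∑ y ∈ partMultiplicities M k, (y i : K) * partWeight a y
        = if i.1 + 1 ≤ k then (i.1 + 1) * a i * partitionSum a M (k - (i.1 + 1)) else 0 := by
    split_ifs with h
    · rw [sum_mul_partWeight_of_le a h, mul_assoc]
    · rw [sum_mul_partWeight_of_lt a (not_le.1 h), mul_zero]
  rw [hswap, sum_congr rfl fun i _ => hterm i,
    Fin.sum_univ_eq_sum_range
      (fun i => if i + 1 ≤ k then ((i : K) + 1) * a i * partitionSum a M (k - (i + 1)) else 0),
    ← sum_filter]
  congr 1
  ext i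
  simp only [mem_filter, mem_range]
  omega

lemma mul_partitionSum_div_succ [CharZero K] (n : ℕ) {k : ℕ} (hk : k ≤ M) :
    k * partitionSum (fun i => (n : K) / (i + 1)) M k
      = n * ∑ j ∈ range k, partitionSum (fun i => (n : K) / (i + 1)) M j := by
  rw [mul_partitionSum, min_eq_right hk, mul_sum]
  conv_rhs => rw [← sum_range_reflect _ k]
  refine sum_congr rfl fun i hi => ?_
  rw [mul_div_cancel₀ _ (Nat.cast_add_one_ne_zero i)]
  congr 2
  have := mem_range.1 hi
  omega

lemma partitionSum_div_succ_eq_choose [CharZero K] (n : ℕ) {k : ℕ} (hk : k ≤ M) :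
    partitionSum (fun i => (n : K) / (i + 1)) M k = (n + k - 1).choose k := by
  induction k using Nat.strong_induction_on with
  | _ k ih =>
  rcases Nat.eq_zero_or_pos k with rfl | hk0
  · simp [partitionSum_zero]
  · have hrec := mul_partitionSum_div_succ (K := K) n hk
    rw [sum_congr rfl fun j hj => ih j (mem_range.1 hj) (by have := mem_range.1 hj; omega)]
      at hrec
    apply mul_left_cancel₀ (Nat.cast_ne_zero.2 hk0.ne' : (k : K) ≠ 0)
    rw [hrec]
    exact_mod_cast (mul_choose_add_sub_one n k).symm

end

theorem stmt_13 (m n : ℕ) :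
    ∑ᶠ y ∈ {y : Fin m → ℕ | ∑ i, (i.1 + 1) * y i = m},
        ∏ i : Fin m,
          (1 / (Nat.factorial (y i) : ℝ)) * ((n : ℝ) / (i.1 + 1 : ℝ)) ^ (y i)
      = ((n + m - 1).choose m : ℝ) := by
  have hset : {y : Fin m → ℕ | ∑ i, (i.1 + 1) * y i = m} = ↑(partMultiplicities m m) := by
    ext y
    simp [mem_partMultiplicities]
  rw [hset, finsum_mem_coe_finset]
  simp only [one_div_mul_eq_div]
  exact partitionSum_div_succ_eq_choose n le_rfl
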